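/- arXiv:1105.6209 — 2 statements merged into one kernel-verified Lean document; each statement's English description precedes it below -/
import Mathlib

section
/- Let \(P(S)=\prod_{j=1}^{2n}(S-B_j)\) be a monic polynomial over a field of characteristic zero, and define \(C(S_1,S_2)=\frac{1}{4\nu}S_1\sum_{\epsilon_1,\epsilon_2\in\{\pm1\}}\frac{P(\epsilon_1 S_1)P(\epsilon_2 S_2)}{\epsilon_1 S_1+\epsilon_2 S_2}\) for a nonzero scalar \(\nu\). Then \(C(S_1,S_2)\) is a polynomial in \(S_1,S_2\) which is odd in \(S_1\) and even in \(S_2\). -/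
open scoped BigOperators

/-- `sgP B s = ∏ⱼ (s - Bⱼ)`. -/
def sgP {K : Type*} [Field K] {m : ℕ} (B : Fin m → K) (s : K) : K :=
  ∏ j, (s - B j)

/-- The rational expression
`(1/(4ν)) S₁ Σ_{ε₁,ε₂=±} P(ε₁S₁)P(ε₂S₂)/(ε₁S₁+ε₂S₂)`. -/
def sgCexpr {K : Type*} [Field K] (ν : K) (P : K → K) (s₁ s₂ : K) : K :=
  (4*ν)⁻¹ * s₁ *
    ( P s₁ * P s₂ / (s₁ + s₂) + P s₁ * P (-s₂) / (s₁ - s₂)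
      + P (-s₁) * P s₂ / (-s₁ + s₂) + P (-s₁) * P (-s₂) / (-s₁ - s₂) )

open MvPolynomial

namespace SgAux

variable {K : Type*} [Field K]

noncomputable def PP {m : ℕ} (B : Fin m → K) {A : Type*} [CommRing A] [Algebra K A] (x : A) : A :=
  ∏ j, (x - algebraMap K A (B j))

lemma map_PP {m : ℕ} (B : Fin m → K) {A A' : Type*} [CommRing A] [Algebra K A]
    [CommRing A'] [Algebra K A'] (f : A →ₐ[K] A') (x : A) :
    f (PP B x) = PP B (f x) := by
  simp [PP, map_prod, map_sub, AlgHom.commutes]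

lemma eval_PP {m : ℕ} (B : Fin m → K) (x : Fin 2 → K) (p : MvPolynomial (Fin 2) K) :
    eval x (PP B p) = sgP B (eval x p) := by
  simp [PP, sgP, algebraMap_eq]

lemma eval_aeval' (x : Fin 2 → K) (v : Fin 2 → MvPolynomial (Fin 2) K)
    (F : MvPolynomial (Fin 2) K) :
    eval x (aeval v F) = eval (fun i => eval x (v i)) F := by
  have hh : ((eval x).comp ((aeval v : MvPolynomial (Fin 2) K →ₐ[K] MvPolynomial (Fin 2) K) : MvPolynomial (Fin 2) K →+* MvPolynomial (Fin 2) K))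
      = eval (fun i => eval x (v i)) := by
    apply ringHom_ext <;> intro c <;> simp
  exact DFunLike.congr_fun hh F

lemma dvd_general (a : MvPolynomial (Fin 1) K) (F : MvPolynomial (Fin 2) K)
    (h : aeval (![a, X 0] : Fin 2 → MvPolynomial (Fin 1) K) F = 0) :
    ((finSuccEquiv K 1).symm (Polynomial.X - Polynomial.C a)) ∣ F := by
  have key : Polynomial.eval a (finSuccEquiv K 1 F) = aeval (![a, X 0] : Fin 2 → MvPolynomial (Fin 1) K) F := by
    have hh : ((Polynomial.evalRingHom a).comp
        ((finSuccEquiv K 1 : MvPolynomial (Fin 2) K ≃ₐ[K] _) : MvPolynomial (Fin 2) K →+* _))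
        = ((aeval (![a, X 0] : Fin 2 → MvPolynomial (Fin 1) K) : MvPolynomial (Fin 2) K →ₐ[K] _) : MvPolynomial (Fin 2) K →+* _) := by
      apply ringHom_ext
      · intro c
        simp [finSuccEquiv_apply, algebraMap_eq]
      · intro i
        fin_cases i
        · simp [finSuccEquiv_X_zero]
        · have h1 : (⟨1, by norm_num⟩ : Fin 2) = Fin.succ 0 := rfl
          simp only [RingHom.coe_comp, Function.comp_apply, RingHom.coe_coe, h1,
            finSuccEquiv_X_succ, Polynomial.eval_C, aeval_X]
          simp
    exact DFunLike.congr_fun hh F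
  have hroot : (finSuccEquiv K 1 F).IsRoot a := by rw [Polynomial.IsRoot, key, h]
  have hdvd := Polynomial.dvd_iff_isRoot.mpr hroot
  have h2 := map_dvd (finSuccEquiv K 1).symm hdvd
  rwa [AlgEquiv.symm_apply_apply] at h2

lemma dvd_add1 (F : MvPolynomial (Fin 2) K)
    (h : aeval (![-X 0, X 0] : Fin 2 → MvPolynomial (Fin 1) K) F = 0) :
    (X 0 + X 1 : MvPolynomial (Fin 2) K) ∣ F := by
  have h1 : finSuccEquiv K 1 ((X 0 : MvPolynomial (Fin 2) K) + X 1)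
      = Polynomial.X - Polynomial.C (-(X 0 : MvPolynomial (Fin 1) K)) := by
    have e : (X 1 : MvPolynomial (Fin 2) K) = X (Fin.succ 0) := rfl
    rw [map_add, finSuccEquiv_X_zero, e, finSuccEquiv_X_succ]
    rw [map_neg, sub_neg_eq_add]
  have := dvd_general (-(X 0 : MvPolynomial (Fin 1) K)) F h
  rwa [← h1, AlgEquiv.symm_apply_apply] at this

lemma dvd_sub1 (F : MvPolynomial (Fin 2) K)
    (h : aeval (![X 0, X 0] : Fin 2 → MvPolynomial (Fin 1) K) F = 0) :
    (X 0 - X 1 : MvPolynomial (Fin 2) K) ∣ F := by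
  have h1 : finSuccEquiv K 1 ((X 0 : MvPolynomial (Fin 2) K) - X 1)
      = Polynomial.X - Polynomial.C (X 0 : MvPolynomial (Fin 1) K) := by
    have e : (X 1 : MvPolynomial (Fin 2) K) = X (Fin.succ 0) := rfl
    rw [map_sub, finSuccEquiv_X_zero, e, finSuccEquiv_X_succ]
  have := dvd_general ((X 0 : MvPolynomial (Fin 1) K)) F h
  rwa [← h1, AlgEquiv.symm_apply_apply] at this

end SgAux

/-- `C(S₁,S₂) = (1/(4ν)) S₁ Σ_{ε₁,ε₂=±} P(ε₁S₁)P(ε₂S₂)/(ε₁S₁+ε₂S₂)` is a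
polynomial in `S₁, S₂`, odd in `S₁` and even in `S₂`. -/
theorem stmt1 (K : Type*) [Field K] [CharZero K] (n : ℕ) (ν : K) (hν : ν ≠ 0)
    (B : Fin (2*n) → K) :
    ∃ C : MvPolynomial (Fin 2) K,
      (∀ s₁ s₂ : K, s₁ + s₂ ≠ 0 → s₁ - s₂ ≠ 0 →
        MvPolynomial.eval ![s₁, s₂] C = sgCexpr ν (sgP B) s₁ s₂) ∧
      (∀ s₁ s₂ : K,
        MvPolynomial.eval ![-s₁, s₂] C = - MvPolynomial.eval ![s₁, s₂] C) ∧
      (∀ s₁ s₂ : K,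
        MvPolynomial.eval ![s₁, -s₂] C = MvPolynomial.eval ![s₁, s₂] C) := by
  classical
  open SgAux MvPolynomial in
  set R := MvPolynomial (Fin 2) K
  set G : R := (PP B (X 0) * PP B (X 1) - PP B (-X 0) * PP B (-X 1)) * (X 0 - X 1)
    + (PP B (X 0) * PP B (-X 1) - PP B (-X 0) * PP B (X 1)) * (X 0 + X 1) with hGdef
  -- first divisibility
  have hσG : aeval (![-X 0, X 0] : Fin 2 → MvPolynomial (Fin 1) K) G = 0 := by
    simp only [hGdef, map_add, map_sub, map_mul, map_neg, map_PP, aeval_X,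
      Matrix.cons_val_zero, Matrix.cons_val_one, Matrix.head_cons, neg_neg]
    ring
  obtain ⟨G1, hG1⟩ := dvd_add1 G hσG
  have hσ'G : aeval (![X 0, X 0] : Fin 2 → MvPolynomial (Fin 1) K) G = 0 := by
    simp only [hGdef, map_add, map_sub, map_mul, map_neg, map_PP, aeval_X,
      Matrix.cons_val_zero, Matrix.cons_val_one, Matrix.head_cons]
    ring
  have h2X : ((X 0 : MvPolynomial (Fin 1) K) + X 0) ≠ 0 := by
    intro h
    have := congrArg (eval (fun _ => (1:K))) h
    simp at this
  have hσ'G1 : aeval (![X 0, X 0] : Fin 2 → MvPolynomial (Fin 1) K) G1 = 0 := by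
    have := congrArg (aeval (![X 0, X 0] : Fin 2 → MvPolynomial (Fin 1) K)) hG1
    rw [hσ'G, map_mul, map_add, aeval_X, aeval_X] at this
    simp only [Matrix.cons_val_zero, Matrix.cons_val_one, Matrix.head_cons] at this
    exact (mul_eq_zero.mp this.symm).resolve_left h2X
  obtain ⟨q, hq⟩ := dvd_sub1 G1 hσ'G1
  have hG : G = (X 0 + X 1) * ((X 0 - X 1) * q) := by rw [hG1, hq]
  refine ⟨MvPolynomial.C ((4*ν)⁻¹) * X 0 * q, ?_, ?_, ?_⟩
  · intro s₁ s₂ h1 h2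
    have hev := congrArg (eval ![s₁, s₂]) hG
    simp only [hGdef, map_add, map_sub, map_mul, map_neg, eval_PP, eval_X,
      Matrix.cons_val_zero, Matrix.cons_val_one, Matrix.head_cons] at hev
    have h3 : -s₁ + s₂ ≠ 0 := fun h => h2 (by linear_combination -h)
    have h4 : -s₁ - s₂ ≠ 0 := fun h => h1 (by linear_combination -h)
    simp only [eval_mul, eval_C, eval_X, Matrix.cons_val_zero]
    have hqv : MvPolynomial.eval ![s₁,s₂] q =
        ((sgP B s₁ * sgP B s₂ - sgP B (-s₁) * sgP B (-s₂))*(s₁-s₂)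
          + (sgP B s₁ * sgP B (-s₂) - sgP B (-s₁) * sgP B s₂)*(s₁+s₂))
          / ((s₁+s₂)*(s₁-s₂)) := by
      rw [eq_div_iff (mul_ne_zero h1 h2)]
      linear_combination -hev
    rw [sgCexpr, hqv]
    congr 1
    field_simp
    ring
  all_goals
    have hXX : (((X 0 + X 1) * (X 0 - X 1)) : MvPolynomial (Fin 2) K) ≠ 0 := by
      intro h
      have := congrArg (eval ![(1:K), 0]) h
      simp at this
  · -- odd in s₁
    have hL : aeval (![-X 0, X 1] : Fin 2 → MvPolynomial (Fin 2) K) G = G := by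
      simp only [hGdef, map_add, map_sub, map_mul, map_neg, map_PP, aeval_X,
        Matrix.cons_val_zero, Matrix.cons_val_one, Matrix.head_cons, neg_neg]
      ring
    have hG' := congrArg (aeval (![-X 0, X 1] : Fin 2 → MvPolynomial (Fin 2) K)) hG
    rw [hL, map_mul, map_mul, map_add, map_sub, aeval_X, aeval_X] at hG'
    simp only [Matrix.cons_val_zero, Matrix.cons_val_one, Matrix.head_cons] at hG'
    have hcan : ((X 0 + X 1) * (X 0 - X 1)) * q
        = ((X 0 + X 1) * (X 0 - X 1)) * (aeval (![-X 0, X 1] : Fin 2 → MvPolynomial (Fin 2) K) q) := by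
      linear_combination hG' - hG
    have hτ : aeval (![-X 0, X 1] : Fin 2 → MvPolynomial (Fin 2) K) q = q :=
      (mul_left_cancel₀ hXX hcan).symm
    intro s₁ s₂
    have h := congrArg (eval ![s₁, s₂]) hτ
    rw [eval_aeval'] at h
    have hv : (fun i => eval ![s₁,s₂] ((![-X 0, X 1] : Fin 2 → MvPolynomial (Fin 2) K) i)) = ![-s₁, s₂] := by
      funext i; fin_cases i <;> simp
    rw [hv] at h
    simp only [eval_mul, eval_C, eval_X, Matrix.cons_val_zero]
    rw [h]; ring
  · -- even in s₂
    have hL : aeval (![X 0, -X 1] : Fin 2 → MvPolynomial (Fin 2) K) G = G := by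
      simp only [hGdef, map_add, map_sub, map_mul, map_neg, map_PP, aeval_X,
        Matrix.cons_val_zero, Matrix.cons_val_one, Matrix.head_cons, neg_neg]
      ring
    have hG' := congrArg (aeval (![X 0, -X 1] : Fin 2 → MvPolynomial (Fin 2) K)) hG
    rw [hL, map_mul, map_mul, map_add, map_sub, aeval_X, aeval_X] at hG'
    simp only [Matrix.cons_val_zero, Matrix.cons_val_one, Matrix.head_cons] at hG'
    have hcan : ((X 0 + X 1) * (X 0 - X 1)) * q
        = ((X 0 + X 1) * (X 0 - X 1)) * (aeval (![X 0, -X 1] : Fin 2 → MvPolynomial (Fin 2) K) q) := by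
      linear_combination hG' - hG
    have hτ : aeval (![X 0, -X 1] : Fin 2 → MvPolynomial (Fin 2) K) q = q :=
      (mul_left_cancel₀ hXX hcan).symm
    intro s₁ s₂
    have h := congrArg (eval ![s₁, s₂]) hτ
    rw [eval_aeval'] at h
    have hv : (fun i => eval ![s₁,s₂] ((![X 0, -X 1] : Fin 2 → MvPolynomial (Fin 2) K) i)) = ![s₁, -s₂] := by
      funext i; fin_cases i <;> simp
    rw [hv] at h
    simp only [eval_mul, eval_C, eval_X, Matrix.cons_val_zero]
    rw [h]
end

section
/- Let \(p(\mathfrak{s})=\prod_{j=1}^{2n}(\mathfrak{s}-\mathfrak{b}_j)\), and define the generating function \(c_{I^-\sqcup I^+}(\mathfrak{t},\mathfrak{s})=\frac{a\mathfrak{t}}{\mathfrak{t}-\mathfrak{q}^2\mathfrak{s}}p(\mathfrak{q}^2\mathfrak{s})-\frac{a^{-1}\mathfrak{q}^2\mathfrak{t}}{\mathfrak{q}^2\mathfrak{t}-\mathfrak{s}}p(\mathfrak{s})+p_{I^+}(\mathfrak{q}^2\mathfrak{t})p_{I^-}(\mathfrak{s})\Bigl(\frac{a^{-1}\mathfrak{q}^2\mathfrak{t}}{\mathfrak{q}^2\mathfrak{t}-\mathfrak{s}}-\frac{a^{-1}\mathfrak{t}}{\mathfrak{t}-\mathfrak{s}}\Bigr)+p_{I^-}(\mathfrak{t})p_{I^+}(\mathfrak{q}^2\mathfrak{s})\Bigl(\frac{a^{-1}\mathfrak{t}}{\mathfrak{t}-\mathfrak{s}}-\frac{a\mathfrak{t}}{\mathfrak{t}-\mathfrak{q}^2\mathfrak{s}}\Bigr)\),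 where \(I^-\sqcup I^+=\{1,\dots,2n\}\) is a partition with \(\#I^-=\#I^+=n\) and \(p_{I^\pm}(\mathfrak{s})=\prod_{j\in I^\pm}(\mathfrak{s}-\mathfrak{b}_j)\). Then \(c_{I^-\sqcup I^+}(\mathfrak{t},\mathfrak{s})\) is a polynomial in \(\mathfrak{t}\) (all apparent poles at \(\mathfrak{t}=\mathfrak{s}\), \(\mathfrak{t}=\mathfrak{q}^2\mathfrak{s}\), \(\mathfrak{t}=\mathfrak{q}^{-2}\mathfrak{s}\) cancel). -/
open scoped BigOperators

set_option maxHeartbeats 4000000 in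
open Polynomial in
/-- The generating function `c_{I⁻⊔I⁺}(𝔱,𝔰)` is a polynomial in `𝔱`: all the
apparent poles at `𝔱 = 𝔰`, `𝔱 = 𝔮²𝔰`, `𝔮²𝔱 = 𝔰` cancel, i.e. there exists a
polynomial agreeing with the rational expression wherever it is defined. -/
theorem stmt19 (K : Type*) [Field K] [CharZero K] (n : ℕ)
    (𝔟 : Fin (2*n) → K) (a q : K) (ha : a ≠ 0) (hq : q ≠ 0) (hq2 : q^2 ≠ 1)
    (I : Finset (Fin (2*n))) (hI : I.card = n) (s : K) :
    ∃ c : Polynomial K, ∀ t : K, t ≠ s → t ≠ q^2 * s → q^2 * t ≠ s →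
      c.eval t =
        a * t / (t - q^2 * s) * (∏ j, (q^2 * s - 𝔟 j))
        - a⁻¹ * q^2 * t / (q^2 * t - s) * (∏ j, (s - 𝔟 j))
        + (∏ j ∈ I, (q^2 * t - 𝔟 j)) * (∏ j ∈ Iᶜ, (s - 𝔟 j)) *
            (a⁻¹ * q^2 * t / (q^2 * t - s) - a⁻¹ * t / (t - s))
        + (∏ j ∈ Iᶜ, (t - 𝔟 j)) * (∏ j ∈ I, (q^2 * s - 𝔟 j)) *
            (a⁻¹ * t / (t - s) - a * t / (t - q^2 * s)) := by
  classical
  set P : Polynomial K := ∏ j ∈ I, (X - C (𝔟 j)) with hP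
  set Q : Polynomial K := ∏ j ∈ Iᶜ, (X - C (𝔟 j)) with hQ
  obtain ⟨h₁, e₁⟩ := Polynomial.X_sub_C_dvd_sub_C_eval (a := q^2*s) (p := Q)
  obtain ⟨h₂, e₂⟩ := Polynomial.X_sub_C_dvd_sub_C_eval (a := s) (p := P)
  have hR : (X - C s) ∣
      (Q * C (P.eval (q^2*s)) - (P.comp (C (q^2) * X)) * C (Q.eval s)) := by
    rw [Polynomial.dvd_iff_isRoot]
    simp [Polynomial.IsRoot, Polynomial.eval_comp, mul_comm]
  obtain ⟨h₃, e₃⟩ := hR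
  refine ⟨C a * X * C (P.eval (q^2*s)) * (-h₁)
    + C a⁻¹ * C (q^2) * X * C (Q.eval s) * (h₂.comp (C (q^2) * X))
    + C a⁻¹ * X * h₃, ?_⟩
  intro t ht1 ht2 ht3
  have hd1 : t - q^2*s ≠ 0 := sub_ne_zero.mpr ht2
  have hd2 : q^2*t - s ≠ 0 := sub_ne_zero.mpr ht3
  have hd3 : t - s ≠ 0 := sub_ne_zero.mpr ht1
  have E1 : Q.eval t - Q.eval (q^2*s) = (t - q^2*s) * h₁.eval t := by
    have := congrArg (Polynomial.eval t) e₁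
    simpa using this
  have E2 : P.eval (q^2*t) - P.eval s = (q^2*t - s) * h₂.eval (q^2*t) := by
    have := congrArg (Polynomial.eval (q^2*t)) e₂
    simpa using this
  have E3 : Q.eval t * P.eval (q^2*s) - P.eval (q^2*t) * Q.eval s
      = (t - s) * h₃.eval t := by
    have := congrArg (Polynomial.eval t) e₃
    simpa [Polynomial.eval_comp] using this
  have key1 : h₁.eval t = (Q.eval t - Q.eval (q^2*s)) / (t - q^2*s) := by
    rw [eq_div_iff hd1]; linear_combination -E1
  have key2 : h₂.eval (q^2*t) = (P.eval (q^2*t) - P.eval s) / (q^2*t - s) := by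
    rw [eq_div_iff hd2]; linear_combination -E2
  have key3 : h₃.eval t = (Q.eval t * P.eval (q^2*s) - P.eval (q^2*t) * Q.eval s) / (t - s) := by
    rw [eq_div_iff hd3]; linear_combination -E3
  have pr1 : (∏ j, (q^2*s - 𝔟 j)) = P.eval (q^2*s) * Q.eval (q^2*s) := by
    rw [hP, hQ, Polynomial.eval_prod, Polynomial.eval_prod]
    simp only [Polynomial.eval_sub, Polynomial.eval_X, Polynomial.eval_C]
    exact (Finset.prod_mul_prod_compl I _).symm
  have pr2 : (∏ j, (s - 𝔟 j)) = P.eval s * Q.eval s := by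
    rw [hP, hQ, Polynomial.eval_prod, Polynomial.eval_prod]
    simp only [Polynomial.eval_sub, Polynomial.eval_X, Polynomial.eval_C]
    exact (Finset.prod_mul_prod_compl I _).symm
  have pr3 : (∏ j ∈ I, (q^2*t - 𝔟 j)) = P.eval (q^2*t) := by
    rw [hP, Polynomial.eval_prod]
    simp only [Polynomial.eval_sub, Polynomial.eval_X, Polynomial.eval_C]
  have pr4 : (∏ j ∈ Iᶜ, (s - 𝔟 j)) = Q.eval s := by
    rw [hQ, Polynomial.eval_prod]
    simp only [Polynomial.eval_sub, Polynomial.eval_X, Polynomial.eval_C]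
  have pr5 : (∏ j ∈ Iᶜ, (t - 𝔟 j)) = Q.eval t := by
    rw [hQ, Polynomial.eval_prod]
    simp only [Polynomial.eval_sub, Polynomial.eval_X, Polynomial.eval_C]
  have pr6 : (∏ j ∈ I, (q^2*s - 𝔟 j)) = P.eval (q^2*s) := by
    rw [hP, Polynomial.eval_prod]
    simp only [Polynomial.eval_sub, Polynomial.eval_X, Polynomial.eval_C]
  rw [pr1, pr2, pr3, pr4, pr5, pr6]
  simp only [Polynomial.eval_add, Polynomial.eval_mul, Polynomial.eval_neg,
    Polynomial.eval_C, Polynomial.eval_X, Polynomial.eval_comp]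
  rw [key1, key2, key3]
  ring
end
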